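/- Let A : ℝ^{n₁×n₂} → ℝ^m be a linear map and let r < n₁/2. Suppose there exists a matrix Y in the null space of A and a decomposition Y = Y₁ + Y₂ with rank(Y₁) = r, rank(Y₂) > r, and ‖Y₁‖_* ≥ ‖Y₂‖_*. Then there exists b ∈ ℝ^m and matrices X₀, X₁ with A(X₀) = A(X₁) = b, rank(X₀) ≤ r, rank(X₁) > rank(X₀), and ‖X₁‖_* ≤ ‖X₀‖_*; in particular, a minimum rank solution of A(X) = b of rank at most r is not the unique minimum nuclear norm solution. -/

import Mathlib

/-! Take `X₀ = Y₁` and `X₁ = -Y₂`: since `Y₁ + Y₂` lies in the null space, both have the same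
image under `A`, and negation changes neither rank nor nuclear norm. -/

open Matrix

/-- The nuclear norm of a real matrix: the sum of its singular values,
i.e. the sum of the square roots of the eigenvalues of `Xᵀ * X`. -/
noncomputable def nuclearNorm {m n : Type*} [Fintype m] [Fintype n] [DecidableEq n]
    (X : Matrix m n ℝ) : ℝ :=
  ∑ i, Real.sqrt ((show (Xᵀ * X).IsHermitian by
    simpa only [conjTranspose_eq_transpose_of_trivial] using
      Matrix.isHermitian_conjTranspose_mul_self X).eigenvalues i)

theorem Matrix.rank_neg {m n R : Type*} [Fintype m] [Fintype n] [CommRing R]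
    (X : Matrix m n R) : (-X).rank = X.rank := by
  have hneg : (-X).mulVecLin = -X.mulVecLin := by ext; simp
  rw [Matrix.rank, Matrix.rank, hneg, LinearMap.range_neg]

theorem nuclearNorm_eq_of_transpose_mul_self_eq {m m' n : Type*} [Fintype m] [Fintype m']
    [Fintype n] [DecidableEq n] {X : Matrix m n ℝ} {Z : Matrix m' n ℝ}
    (h : Xᵀ * X = Zᵀ * Z) : nuclearNorm X = nuclearNorm Z := by
  unfold nuclearNorm
  -- `Xᵀ * X` also occurs in the type of the Hermitian proof, which must move with it
  generalize_proofs hX hZ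
  revert hX
  rw [h]
  intro
  rfl

theorem nuclearNorm_neg {m n : Type*} [Fintype m] [Fintype n] [DecidableEq n]
    (X : Matrix m n ℝ) : nuclearNorm (-X) = nuclearNorm X :=
  nuclearNorm_eq_of_transpose_mul_self_eq <| by
    rw [transpose_neg, Matrix.neg_mul, Matrix.mul_neg, neg_neg]

theorem stmt1_general (n₁ n₂ m r : ℕ)
    (A : Matrix (Fin n₁) (Fin n₂) ℝ →ₗ[ℝ] (Fin m → ℝ))
    (Y Y₁ Y₂ : Matrix (Fin n₁) (Fin n₂) ℝ)
    (hY : A Y = 0) (hdec : Y = Y₁ + Y₂) (h1 : Y₁.rank = r) (h2 : r < Y₂.rank)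
    (hnuc : nuclearNorm Y₂ ≤ nuclearNorm Y₁) :
    ∃ (b : Fin m → ℝ) (X₀ X₁ : Matrix (Fin n₁) (Fin n₂) ℝ),
      A X₀ = b ∧ A X₁ = b ∧ X₀.rank ≤ r ∧ X₀.rank < X₁.rank ∧
      X₁ ≠ X₀ ∧ nuclearNorm X₁ ≤ nuclearNorm X₀ := by
  have hrank : Y₁.rank < (-Y₂).rank := by rwa [h1, Matrix.rank_neg]
  refine ⟨A Y₁, Y₁, -Y₂, rfl, ?_, h1.le, hrank, ?_, ?_⟩
  · rw [map_neg, neg_eq_iff_add_eq_zero, add_comm, ← map_add, ← hdec, hY]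
  · exact fun heq => hrank.ne (congrArg Matrix.rank heq).symm
  · rwa [nuclearNorm_neg]

/-- If some null-space element admits a decomposition `Y = Y₁ + Y₂` with
`rank Y₁ = r`, `rank Y₂ > r` and `‖Y₁‖_* ≥ ‖Y₂‖_*`, then there are `b`, `X₀`, `X₁`
with `A X₀ = A X₁ = b`, `rank X₀ ≤ r < rank X₁` and `‖X₁‖_* ≤ ‖X₀‖_*`:
a minimum rank solution of rank at most `r` is not the unique minimum nuclear
norm solution. -/
theorem stmt1 (n₁ n₂ m r : ℕ) (hr : 2 * r < n₁)
    (A : Matrix (Fin n₁) (Fin n₂) ℝ →ₗ[ℝ] (Fin m → ℝ))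
    (Y Y₁ Y₂ : Matrix (Fin n₁) (Fin n₂) ℝ)
    (hY : A Y = 0) (hdec : Y = Y₁ + Y₂) (h1 : Y₁.rank = r) (h2 : r < Y₂.rank)
    (hnuc : nuclearNorm Y₂ ≤ nuclearNorm Y₁) :
    ∃ (b : Fin m → ℝ) (X₀ X₁ : Matrix (Fin n₁) (Fin n₂) ℝ),
      A X₀ = b ∧ A X₁ = b ∧ X₀.rank ≤ r ∧ X₀.rank < X₁.rank ∧
      X₁ ≠ X₀ ∧ nuclearNorm X₁ ≤ nuclearNorm X₀ :=
  stmt1_general n₁ n₂ m r A Y Y₁ Y₂ hY hdec h1 h2 hnuc
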